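/- A continuous function f : X → Y is a polynomial of degree at most k (i.e., a finite sum f = ∑_{n=0}^k diag(ξ_n) with ξ_n continuous symmetric n-multilinear maps) if and only if Δ^{k+1}_u f(x) = 0 for all x ∈ X and all u ∈ X^{k+1}. -/

import Mathlib

open Finset

/-- The finite difference of order `m`:
`Δ^m_u f (x) = ∑_{α ∈ {0,1}^m} (-1)^{m-|α|} f (x + α·u)`. -/
def fdiff {X Y : Type*} [AddCommGroup X] [AddCommGroup Y] {m : ℕ}
    (u : Fin m → X) (f : X → Y) (x : X) : Y :=
  ∑ α : Fin m → Bool,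
    ((-1 : ℤ) ^ (m - (Finset.univ.filter fun i => α i).card)) •
      f (x + ∑ i, if α i then u i else 0)

/-!
For an `m`-linear `ξ`, expanding `ξ (x + ∑ αᵢ uᵢ, …)` by multilinearity and performing the
alternating sum over `α` first turns `Δⁿ_u` of `y ↦ ξ (y, …, y)` into a sum of values of `ξ`
indexed by the ways of filling the `m` slots with `x` and the `uᵢ` so that every `uᵢ` is used.
There are none when `m < n`, which gives one direction; when `m = n` they are the permutations
of `u`, so the sum is `m! ξ u` for symmetric `ξ`.

Conversely, if `Δⁿ⁺¹ f = 0` then `Δⁿ_u f x` does not depend on `x`, which makes it additive in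
`u₀` (telescope `f (y + a + b) - f y` through `f (y + b)`), hence in every `uᵢ` by symmetry.
Continuity upgrades additivity to `ℝ`-linearity, so `T u = Δⁿ_u f 0` is a symmetric continuous
`n`-linear map, and `f - diag (T / n!)` has vanishing `n`-th differences; induct on `n`.
-/

theorem neg_one_pow_sub_card_filter {m : ℕ} (α : Fin m → Bool) :
    (-1 : ℤ) ^ (m - #{i | α i}) = ∏ i, if α i then 1 else -1 := by
  rw [Finset.prod_ite, prod_const_one, one_mul, prod_const, filter_not,
    card_sdiff_of_subset (filter_subset _ _), card_univ, Fintype.card_fin]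

theorem sum_prod_sign_of_forall_imp {n : ℕ} (p : Fin n → Prop) [DecidablePred p] :
    ∑ α : Fin n → Bool, (if ∀ i, p i → α i then ∏ i, if α i then (1 : ℤ) else -1 else 0)
      = if ∀ i, p i then 1 else 0 := by
  set g : Fin n → Bool → ℤ := fun i b => if b then 1 else if p i then 0 else -1
  -- both the sign and the indicator factor over the coordinates
  have factor : ∀ α : Fin n → Bool,
      (if ∀ i, p i → α i then ∏ i, if α i then (1 : ℤ) else -1 else 0) = ∏ i, g i (α i) := by
    intro α
    split_ifs with hα
    · refine prod_congr rfl fun i _ => ?_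
      cases hi : α i
      · have hpi : ¬p i := fun hpi => by simpa [hi] using hα i hpi
        simp [g, hpi]
      · simp [g]
    · push Not at hα
      obtain ⟨i, hpi, hαi⟩ := hα
      exact (prod_eq_zero (mem_univ i) (by simp [g, hpi, hαi])).symm
  have sum_g : ∀ i, ∑ b, g i b = if p i then 1 else 0 := fun i => by
    by_cases hpi : p i <;> simp [g, hpi]
  simp only [factor, ← Fintype.prod_sum, sum_g, prod_boole, mem_univ, true_imp_iff]

section Algebraic

variable {X Y : Type*} [AddCommGroup X] [AddCommGroup Y]

theorem fdiff_eq_sum_prod {m : ℕ} (u : Fin m → X) (f : X → Y) (x : X) :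
    fdiff u f x = ∑ α : Fin m → Bool,
      (∏ i, if α i then (1 : ℤ) else -1) • f (x + ∑ i, if α i then u i else 0) := by
  simp only [fdiff, neg_one_pow_sub_card_filter]

theorem fdiff_cons {m : ℕ} (c : X) (w : Fin m → X) (f : X → Y) (x : X) :
    fdiff (Fin.cons c w) f x = fdiff w (fun y => f (y + c) - f y) x := by
  simp only [fdiff_eq_sum_prod]
  rw [← (Fin.consEquiv fun _ => Bool).sum_comp, Fintype.sum_prod_type, sum_comm]
  refine sum_congr rfl fun β _ => ?_
  simp only [Fintype.sum_bool, Fin.consEquiv_apply, Fin.prod_univ_succ, Fin.sum_univ_succ,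
    Fin.cons_zero, Fin.cons_succ, if_true, if_false, one_mul, neg_one_mul, neg_smul, zero_add,
    smul_sub, Bool.false_eq_true]
  rw [add_left_comm, add_comm c, ← sub_eq_add_neg]

theorem fdiff_comp_perm {m : ℕ} (u : Fin m → X) (σ : Equiv.Perm (Fin m)) (f : X → Y) (x : X) :
    fdiff (u ∘ σ) f x = fdiff u f x := by
  simp only [fdiff_eq_sum_prod]
  refine Fintype.sum_equiv (σ.arrowCongr (Equiv.refl Bool)) _ _ fun α => ?_
  conv_rhs => rw [← Equiv.prod_comp σ, ← Equiv.sum_comp σ]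
  simp [Equiv.arrowCongr]

theorem fdiff_add {m : ℕ} (u : Fin m → X) (f g : X → Y) (x : X) :
    fdiff u (fun y => f y + g y) x = fdiff u f x + fdiff u g x := by
  simp only [fdiff, smul_add, sum_add_distrib]

theorem fdiff_sub {m : ℕ} (u : Fin m → X) (f g : X → Y) (x : X) :
    fdiff u (fun y => f y - g y) x = fdiff u f x - fdiff u g x := by
  simp only [fdiff, smul_sub, sum_sub_distrib]

theorem fdiff_sum {m : ℕ} {ι : Type*} (s : Finset ι) (u : Fin m → X) (f : ι → X → Y) (x : X) :
    fdiff u (fun y => ∑ n ∈ s, f n y) x = ∑ n ∈ s, fdiff u (f n) x := by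
  simp only [fdiff, smul_sum]
  exact sum_comm

theorem fdiff_comp_add_right {m : ℕ} (u : Fin m → X) (f : X → Y) (v x : X) :
    fdiff u (fun y => f (y + v)) x = fdiff u f (x + v) := by
  simp only [fdiff, add_right_comm x v]

section VanishingDifference

variable {f : X → Y} {n : ℕ}

theorem fdiff_apply_add_of_fdiff_succ_eq_zero (h : ∀ x (u : Fin (n + 1) → X), fdiff u f x = 0)
    (u : Fin n → X) (x v : X) : fdiff u f (x + v) = fdiff u f x := by
  have := h x (Fin.cons v u)
  rwa [fdiff_cons, fdiff_sub, fdiff_comp_add_right, sub_eq_zero] at this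

theorem fdiff_cons_add_of_fdiff_succ_eq_zero (h : ∀ x (u : Fin (n + 2) → X), fdiff u f x = 0)
    (a b : X) (w : Fin n → X) (x : X) :
    fdiff (Fin.cons (a + b) w) f x = fdiff (Fin.cons a w) f x + fdiff (Fin.cons b w) f x := by
  have split : ∀ y, f (y + (a + b)) - f y = (f (y + b + a) - f (y + b)) + (f (y + b) - f y) :=
    fun y => by rw [sub_add_sub_cancel, add_assoc, add_comm b]
  rw [fdiff_cons, funext split, fdiff_add, fdiff_comp_add_right (f := fun y => f (y + a) - f y),
    ← fdiff_cons, ← fdiff_cons, fdiff_apply_add_of_fdiff_succ_eq_zero h]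

theorem fdiff_update_add_of_fdiff_succ_eq_zero (h : ∀ x (u : Fin (n + 1) → X), fdiff u f x = 0)
    (u : Fin n → X) (i : Fin n) (a b x : X) :
    fdiff (Function.update u i (a + b)) f x
      = fdiff (Function.update u i a) f x + fdiff (Function.update u i b) f x := by
  cases n with
  | zero => exact i.elim0
  | succ n =>
    have swap_zero : ∀ c, Function.update u i c ∘ Equiv.swap 0 i
        = Fin.cons c (Fin.tail (u ∘ Equiv.swap 0 i)) := fun c => by
      rw [Function.update_comp_equiv, Equiv.symm_swap, Equiv.swap_apply_right,
        ← Fin.update_cons_zero, Fin.cons_self_tail]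
    have swap_fdiff := fun c => fdiff_comp_perm (Function.update u i c) (Equiv.swap 0 i) f x
    simp only [swap_zero] at swap_fdiff
    rw [← swap_fdiff, ← swap_fdiff, ← swap_fdiff]
    exact fdiff_cons_add_of_fdiff_succ_eq_zero h a b _ x

end VanishingDifference

section Diagonal

variable {R : Type*} [Semiring R] [Module R X] [Module R Y]

-- `r j = none` puts `x` into slot `j`, and `r j = some i` puts `u i` there.
theorem fdiff_diag {m n : ℕ} (ξ : MultilinearMap R (fun _ : Fin m => X) Y) (u : Fin n → X)
    (x : X) :
    fdiff u (fun y => ξ fun _ => y) x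
      = ∑ r : Fin m → Option (Fin n) with ∀ i, ∃ j, r j = some i, ξ fun j => (r j).elim x u := by
  have expand : ∀ α : Fin n → Bool, ξ (fun _ => x + ∑ i, if α i then u i else 0)
      = ∑ r : Fin m → Option (Fin n),
          if ∀ i, (∃ j, r j = some i) → α i then ξ (fun j => (r j).elim x u) else 0 := by
    intro α
    have : x + ∑ i, (if α i then u i else 0)
        = ∑ t : Option (Fin n), t.elim x fun i => if α i then u i else 0 :=
      (Fintype.sum_option fun t => t.elim x fun i => if α i then u i else 0).symm
    rw [this, ξ.map_sum]
    refine sum_congr rfl fun r _ => ?_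
    split_ifs with hα
    · congr 1
      funext j
      cases hr : r j with
      | none => rfl
      | some i => simp [hα i ⟨j, hr⟩]
    · push Not at hα
      obtain ⟨i, ⟨j, hr⟩, hαi⟩ := hα
      exact ξ.map_coord_zero j (by simp [hr, hαi])
  rw [fdiff_eq_sum_prod]
  simp only [expand, smul_sum]
  rw [sum_comm, sum_filter]
  refine sum_congr rfl fun r _ => ?_
  have sign_sum := sum_prod_sign_of_forall_imp fun i => ∃ j, r j = some i
  calc ∑ α : Fin n → Bool, (∏ i, if α i then (1 : ℤ) else -1)
        • (if ∀ i, (∃ j, r j = some i) → α i then ξ (fun j => (r j).elim x u) else 0)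
      = ∑ α : Fin n → Bool, (if ∀ i, (∃ j, r j = some i) → α i
          then ∏ i, if α i then (1 : ℤ) else -1 else 0) • ξ (fun j => (r j).elim x u) := by
        simp only [smul_ite, ite_smul, smul_zero, zero_smul]
    _ = _ := by
      rw [← sum_smul, sign_sum, ite_smul, one_smul, zero_smul]

theorem injective_of_apply_eq_some {m n : ℕ} {r : Fin m → Option (Fin n)} {g : Fin n → Fin m}
    (hg : ∀ i, r (g i) = some i) : Function.Injective g :=
  .of_comp (f := r) fun i i' h =>
    Option.some_injective _ (by simpa only [Function.comp, hg] using h)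

theorem fdiff_diag_eq_zero_of_lt {m n : ℕ} (hmn : m < n)
    (ξ : MultilinearMap R (fun _ : Fin m => X) Y) (u : Fin n → X) (x : X) :
    fdiff u (fun y => ξ fun _ => y) x = 0 := by
  rw [fdiff_diag]
  refine sum_eq_zero fun r hr => ?_
  choose g hg using (mem_filter.mp hr).2
  have := Fintype.card_le_of_injective g (injective_of_apply_eq_some hg)
  simp only [Fintype.card_fin] at this
  omega

theorem fdiff_diag_self {m : ℕ} (ξ : MultilinearMap R (fun _ : Fin m => X) Y)
    (hξ : ∀ (σ : Equiv.Perm (Fin m)) (v : Fin m → X), ξ (v ∘ σ) = ξ v) (u : Fin m → X) (x : X) :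
    fdiff u (fun y => ξ fun _ => y) x = m.factorial • ξ u := by
  have reindex : ∑ σ : Equiv.Perm (Fin m), ξ (u ∘ σ)
      = ∑ r : Fin m → Option (Fin m) with ∀ i, ∃ j, r j = some i, ξ fun j => (r j).elim x u := by
    refine sum_nbij (fun σ => some ∘ σ)
      (fun σ _ => mem_filter.mpr ⟨mem_univ _, fun i => ⟨σ.symm i, by simp⟩⟩)
      (fun σ _ τ _ h => Equiv.ext fun j => Option.some_injective _ (congrFun h j)) ?_ fun σ _ => rfl
    intro r hr
    choose g hg using (mem_filter.mp hr).2
    set σ := Equiv.ofBijective g (Finite.injective_iff_bijective.mp (injective_of_apply_eq_some hg))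
    refine ⟨σ.symm, mem_coe.mpr (mem_univ _), funext fun j => ?_⟩
    change some (σ.symm j) = r j
    rw [← hg]
    exact congrArg r (σ.apply_symm_apply j)
  rw [fdiff_diag, ← reindex]
  simp only [hξ, sum_const, card_univ, Fintype.card_perm, Fintype.card_fin]

end Diagonal

end Algebraic

theorem exists_continuousMultilinearMap_of_map_update_add {ι : Type*} [DecidableEq ι]
    {E : ι → Type*} [∀ i, AddCommGroup (E i)] [∀ i, Module ℝ (E i)] [∀ i, TopologicalSpace (E i)]
    [∀ i, ContinuousSMul ℝ (E i)] {F : Type*} [AddCommGroup F] [Module ℝ F] [TopologicalSpace F]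
    [ContinuousSMul ℝ F] [T2Space F] (T : (∀ i, E i) → F) (hT : Continuous T)
    (hadd : ∀ u i a b, T (Function.update u i (a + b))
      = T (Function.update u i a) + T (Function.update u i b)) :
    ∃ ξ : ContinuousMultilinearMap ℝ E F, ⇑ξ = T := by
  have hsmul : ∀ u i (c : ℝ) a, T (Function.update u i (c • a)) = c • T (Function.update u i a) :=
    fun u i => map_real_smul (AddMonoidHom.mk' (fun a => T (Function.update u i a)) (hadd u i))
      (hT.comp (continuous_const.update i continuous_id))
  refine ⟨⟨⟨T, fun u i a b => ?_, fun u i c a => ?_⟩, hT⟩, rfl⟩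
  · convert hadd u i a b
  · convert hsmul u i c a

theorem continuous_fdiff {X Y : Type*} [AddCommGroup X] [TopologicalSpace X] [ContinuousAdd X]
    [AddCommGroup Y] [TopologicalSpace Y] [IsTopologicalAddGroup Y] {m : ℕ} {f : X → Y}
    (hf : Continuous f) (x : X) : Continuous fun u : Fin m → X => fdiff u f x := by
  have hsum : ∀ α : Fin m → Bool, Continuous fun u : Fin m → X => ∑ i, if α i then u i else 0 :=
    fun α => continuous_finsetSum _ fun i _ =>
      continuous_if_const _ (fun _ => continuous_apply i) fun _ => continuous_const
  unfold fdiff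
  fun_prop

section Normed

variable {X Y : Type*} [NormedAddCommGroup X] [NormedSpace ℝ X] [NormedAddCommGroup Y]
  [NormedSpace ℝ Y]

theorem exists_symmetric_fdiff_sub_diag_eq_zero {n : ℕ} {f : X → Y} (hf : Continuous f)
    (h : ∀ x (u : Fin (n + 1) → X), fdiff u f x = 0) :
    ∃ ξ : ContinuousMultilinearMap ℝ (fun _ : Fin n => X) Y,
      (∀ (σ : Equiv.Perm (Fin n)) (v : Fin n → X), ξ (v ∘ σ) = ξ v) ∧
      ∀ x (u : Fin n → X), fdiff u (fun y => f y - ξ fun _ => y) x = 0 := by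
  obtain ⟨T, hT⟩ := exists_continuousMultilinearMap_of_map_update_add (fun u => fdiff u f 0)
    (continuous_fdiff hf 0) fun u i a b => fdiff_update_add_of_fdiff_succ_eq_zero h u i a b 0
  have hT_symm : ∀ (σ : Equiv.Perm (Fin n)) v, T (v ∘ σ) = T v := by
    simp only [hT, fdiff_comp_perm, implies_true]
  have fdiff_eq_T : ∀ x u, fdiff u f x = T u := fun x u => by
    rw [hT, ← zero_add x, fdiff_apply_add_of_fdiff_succ_eq_zero h]
  set ξ := (n.factorial : ℝ)⁻¹ • T
  have hξ_symm : ∀ (σ : Equiv.Perm (Fin n)) v, ξ (v ∘ σ) = ξ v := by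
    simp only [ξ, smul_apply, hT_symm, implies_true]
  refine ⟨ξ, hξ_symm, fun x u => ?_⟩
  have fdiff_ξ := fdiff_diag_self ξ.toMultilinearMap hξ_symm u x
  simp only [ContinuousMultilinearMap.coe_coe] at fdiff_ξ
  rw [fdiff_sub, fdiff_ξ, fdiff_eq_T, ← Nat.cast_smul_eq_nsmul ℝ, smul_apply,
    smul_inv_smul₀ (by positivity), sub_self]

def IsPolynomialOfDegreeLT (k : ℕ) (f : X → Y) : Prop :=
  ∃ ξ : ∀ n : Fin k, ContinuousMultilinearMap ℝ (fun _ : Fin n => X) Y,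
    (∀ (n : Fin k) (σ : Equiv.Perm (Fin n)) (v : Fin n → X), ξ n (v ∘ σ) = ξ n v) ∧
    ∀ x, f x = ∑ n : Fin k, ξ n fun _ => x

theorem IsPolynomialOfDegreeLT.fdiff_eq_zero {k : ℕ} {f : X → Y}
    (hf : IsPolynomialOfDegreeLT k f) (u : Fin k → X) (x : X) : fdiff u f x = 0 := by
  obtain ⟨ξ, -, hξ⟩ := hf
  rw [funext hξ, fdiff_sum]
  exact sum_eq_zero fun n _ => fdiff_diag_eq_zero_of_lt n.isLt (ξ n).toMultilinearMap u x

theorem IsPolynomialOfDegreeLT.add_diag {k : ℕ} {g : X → Y} (hg : IsPolynomialOfDegreeLT k g)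
    (ξ : ContinuousMultilinearMap ℝ (fun _ : Fin k => X) Y)
    (hξ : ∀ (σ : Equiv.Perm (Fin k)) (v : Fin k → X), ξ (v ∘ σ) = ξ v) :
    IsPolynomialOfDegreeLT (k + 1) fun x => g x + ξ fun _ => x := by
  obtain ⟨η, hη_symm, hη⟩ := hg
  refine ⟨Fin.lastCases ξ η, fun n => ?_, fun x => ?_⟩
  · induction n using Fin.lastCases with
    | last => intro σ v; simp only [Fin.lastCases_last]; exact hξ σ v
    | cast n => intro σ v; simp only [Fin.lastCases_castSucc]; exact hη_symm n σ v
  · simp only [Fin.sum_univ_castSucc, Fin.lastCases_last, Fin.lastCases_castSucc, hη]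
    rfl

theorem isPolynomialOfDegreeLT_of_fdiff_eq_zero {k : ℕ} {f : X → Y} (hf : Continuous f)
    (h : ∀ x (u : Fin k → X), fdiff u f x = 0) : IsPolynomialOfDegreeLT k f := by
  induction k generalizing f with
  | zero =>
    exact ⟨fun n => n.elim0, fun n => n.elim0, fun x => by simpa [fdiff] using h x Fin.elim0⟩
  | succ k ih =>
    obtain ⟨ξ, hξ_symm, hξ⟩ := exists_symmetric_fdiff_sub_diag_eq_zero hf h
    have hg := ih (f := fun y => f y - ξ fun _ => y) (by fun_prop) hξ
    simpa only [sub_add_cancel] using hg.add_diag ξ hξ_symm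

end Normed

theorem polynomial_iff_fdiff_vanish_general {X Y : Type*}
    [NormedAddCommGroup X] [NormedSpace ℝ X]
    [NormedAddCommGroup Y] [NormedSpace ℝ Y]
    (k : ℕ) (f : X → Y) (hf : Continuous f) :
    (∃ ξ : ∀ n : Fin (k + 1), ContinuousMultilinearMap ℝ (fun _ : Fin n => X) Y,
        (∀ (n : Fin (k + 1)) (σ : Equiv.Perm (Fin n)) (v : Fin n → X),
          ξ n (v ∘ σ) = ξ n v) ∧
        ∀ x, f x = ∑ n : Fin (k + 1), ξ n (fun _ => x)) ↔
      ∀ (x : X) (u : Fin (k + 1) → X), fdiff u f x = 0 :=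
  ⟨fun hpoly x u => IsPolynomialOfDegreeLT.fdiff_eq_zero hpoly u x,
    isPolynomialOfDegreeLT_of_fdiff_eq_zero hf⟩

/-- A continuous function is a polynomial of degree `≤ k` iff all its finite
differences of order `k + 1` vanish. -/
theorem polynomial_iff_fdiff_vanish {X Y : Type*}
    [NormedAddCommGroup X] [NormedSpace ℝ X] [CompleteSpace X]
    [NormedAddCommGroup Y] [NormedSpace ℝ Y] [CompleteSpace Y]
    (k : ℕ) (f : X → Y) (hf : Continuous f) :
    (∃ ξ : ∀ n : Fin (k + 1), ContinuousMultilinearMap ℝ (fun _ : Fin n => X) Y,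
        (∀ (n : Fin (k + 1)) (σ : Equiv.Perm (Fin n)) (v : Fin n → X),
          ξ n (v ∘ σ) = ξ n v) ∧
        ∀ x, f x = ∑ n : Fin (k + 1), ξ n (fun _ => x)) ↔
      ∀ (x : X) (u : Fin (k + 1) → X), fdiff u f x = 0 :=
  polynomial_iff_fdiff_vanish_general k f hf
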